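/- In the set-cover reduction graph for multistage spanning tree maintenance — with root r, set-vertices s₁,...,s_m, long-term edges (r, s_i), and at timestep j the zero-cost edges forming a clique on F_j = {s_i : u_j ∈ S_i} and a clique on {r} ∪ (complement of F_j) — a subset A ⊆ {(r,s_i) : i ∈ [m]} of long-term edges can be extended by zero-cost edges of timestep j to a spanning tree of the graph if and only if A contains some edge (r, s_i) with s_i ∈ F_j. -/

import Mathlib

/-!
If some `sᵢ ∈ F_j` has its long-term edge in `A`, the root reaches `sᵢ`, every vertex of `F_j`
through the clique on `F_j`, and every other vertex directly. Otherwise no edge leaves the clique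
on `F_j` (which is nonempty), so it is cut off from the root.
-/

/-- The graph at timestep `j` of the set-cover reduction, where `A` indexes the
acquired long-term edges `(r, sᵢ)`: the root `r` is `none`; the zero-cost edges
form a clique on `Fj` and a clique on `{r} ∪ Fjᶜ`. -/
def scGraph (m : ℕ) (Fj A : Finset (Fin m)) : SimpleGraph (Option (Fin m)) :=
  SimpleGraph.fromRel (fun x y =>
    match x, y with
    | none, some i => i ∈ A ∨ i ∉ Fj
    | some i, some i' => (i ∈ Fj ∧ i' ∈ Fj) ∨ (i ∉ Fj ∧ i' ∉ Fj)
    | _, _ => False)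

namespace scGraph

variable {m : ℕ} {Fj A : Finset (Fin m)}

@[simp]
lemma adj_none_some {i : Fin m} : (scGraph m Fj A).Adj none (some i) ↔ i ∈ A ∨ i ∉ Fj := by
  simp [scGraph]

@[simp]
lemma adj_some_none {i : Fin m} : (scGraph m Fj A).Adj (some i) none ↔ i ∈ A ∨ i ∉ Fj := by
  simp [scGraph]

@[simp]
lemma adj_some_some {i i' : Fin m} :
    (scGraph m Fj A).Adj (some i) (some i') ↔ i ≠ i' ∧ (i ∈ Fj ↔ i' ∈ Fj) := by
  simp only [scGraph, SimpleGraph.fromRel_adj, ne_eq, Option.some.injEq]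
  tauto

lemma reachable_none_of_mem {i₀ : Fin m} (hi₀F : i₀ ∈ Fj) (hi₀A : i₀ ∈ A) :
    ∀ v, (scGraph m Fj A).Reachable none v
  | none => .rfl
  | some i => by
    by_cases hi : i ∈ A ∨ i ∉ Fj
    · exact (adj_none_some.mpr hi).reachable
    · obtain ⟨hiA, hiF⟩ := not_or.mp hi
      have hne : i₀ ≠ i := by rintro rfl; exact hiA hi₀A
      exact (adj_none_some.mpr (.inl hi₀A)).reachable.trans
        (adj_some_some.mpr ⟨hne, iff_of_true hi₀F (not_not.mp hiF)⟩).reachable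

lemma mem_of_adj_of_mem (hFA : ∀ i ∈ Fj, i ∉ A) {x y : Option (Fin m)}
    (hxy : (scGraph m Fj A).Adj x y) (hx : x ∈ some '' (Fj : Set (Fin m))) :
    y ∈ some '' (Fj : Set (Fin m)) := by
  obtain ⟨i, hi, rfl⟩ := hx
  cases y with
  | none => exact absurd hi ((adj_some_none.mp hxy).resolve_left (hFA i hi))
  | some i' => exact ⟨i', (adj_some_some.mp hxy).2.mp hi, rfl⟩

end scGraph

open scGraph in
theorem stmt_15 (m : ℕ) (Fj : Finset (Fin m)) (hFj : Fj.Nonempty) (A : Finset (Fin m)) :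
    (scGraph m Fj A).Connected ↔ ∃ i ∈ Fj, i ∈ A := by
  constructor
  · intro hconn
    by_contra! hFA
    obtain ⟨i₀, hi₀⟩ := hFj
    obtain ⟨p⟩ := hconn.preconnected (some i₀) none
    obtain ⟨d, -, hd, hd'⟩ :=
      p.exists_boundary_dart (some '' (Fj : Set (Fin m))) ⟨i₀, hi₀, rfl⟩ (by simp)
    exact hd' (mem_of_adj_of_mem hFA d.adj hd)
  · rintro ⟨i, hiF, hiA⟩
    exact (SimpleGraph.connected_iff_exists_forall_reachable _).mpr
      ⟨none, reachable_none_of_mem hiF hiA⟩
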